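/- arXiv:1610.01227 — 5 statements merged into one kernel-verified Lean document; each statement's English description precedes it below -/
import Mathlib

section
/- For all positive reals x and y, (min(x,y)) · (log(x/y))² ≤ 4e⁻² · (x + y). -/
/-!
Both sides are symmetric in `x` and `y`, so let `y ≤ x` and `t = x / y ≥ 1`. The tangent line
`e · s ≤ exp s` at `s = log t / 2` gives `e · log t / 2 ≤ √t`, hence `(log t)² ≤ 4 e⁻² t`;
multiplying by `y` yields `y (log (x / y))² ≤ 4 e⁻² x`.
-/

open Real

lemma sq_le_four_mul_exp_neg_two_mul_exp {u : ℝ} (hu : 0 ≤ u) :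
    u ^ 2 ≤ 4 * exp (-2) * exp u := by
  have htangent : exp 1 * (u / 2) ≤ exp (u / 2) := exp_one_mul_le_exp
  have hexp : exp (-2) * exp 1 ^ 2 = 1 := by
    rw [← exp_nat_mul, ← exp_add]; norm_num
  calc u ^ 2 = 4 * exp (-2) * (exp 1 * (u / 2)) ^ 2 := by linear_combination (-u ^ 2) * hexp
    _ ≤ 4 * exp (-2) * exp (u / 2) ^ 2 := by gcongr
    _ = 4 * exp (-2) * exp u := by rw [← exp_nat_mul]; ring_nf

lemma sq_log_le_four_mul_exp_neg_two_mul {t : ℝ} (ht : 1 ≤ t) :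
    log t ^ 2 ≤ 4 * exp (-2) * t := by
  simpa [exp_log (by linarith : 0 < t)] using
    sq_le_four_mul_exp_neg_two_mul_exp (log_nonneg ht)

lemma mul_sq_log_div_le_of_le {x y : ℝ} (hy : 0 < y) (hyx : y ≤ x) :
    y * log (x / y) ^ 2 ≤ 4 * exp (-2) * x := by
  calc y * log (x / y) ^ 2 ≤ y * (4 * exp (-2) * (x / y)) := by
        gcongr; exact sq_log_le_four_mul_exp_neg_two_mul ((one_le_div hy).2 hyx)
    _ = 4 * exp (-2) * x := by field_simp

/-- For all positive reals `x` and `y`, `(min x y) * (log (x/y))^2 ≤ 4 e⁻² (x + y)`. -/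
theorem min_mul_sq_log_div_le (x y : ℝ) (hx : 0 < x) (hy : 0 < y) :
    min x y * (Real.log (x / y)) ^ 2 ≤ 4 * Real.exp (-2) * (x + y) := by
  have hswap : log (x / y) ^ 2 = log (y / x) ^ 2 := by
    rw [← inv_div, log_inv, neg_sq]
  have hexp : 0 < exp (-2) := exp_pos _
  rcases le_total x y with hxy | hyx
  · rw [min_eq_left hxy, hswap]
    linarith [mul_sq_log_div_le_of_le hx hxy, mul_pos hexp hx]
  · rw [min_eq_right hyx]
    linarith [mul_sq_log_div_le_of_le hy hyx, mul_pos hexp hy]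
end

section
/- Let h₁, …, hₙ : ℝ → ℝ be Borel measurable, and let φ₁, …, φₙ : ℝ → ℝ be concave functions satisfying φₙ ≥ hₙ pointwise and φₖ(y) ≥ hₖ(y) + φₖ₊₁(y) for all y ∈ ℝ and k ∈ {1,…,n−1}. Then for every martingale (X₀, X₁, …, Xₙ) with X₀ = x₀ a.s. (with all relevant expectations finite), E[∑ₖ₌₁ⁿ hₖ(Xₖ)] ≤ φ₁(x₀). -/
/-!
Backward induction on `k` shows `E[∑_{i=k}^n hᵢ(Xᵢ)] ≤ E[φₖ(Xₖ)]`. The inductive step compares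
`E[φₖ₊₁(Xₖ₊₁)]` with `E[φₖ(Xₖ) - hₖ(Xₖ)]`: by conditional Jensen for the concave `φₖ₊₁` and the
martingale property, `E[φₖ₊₁(Xₖ₊₁) | 𝓕ₖ] ≤ φₖ₊₁(Xₖ) ≤ φₖ(Xₖ) - hₖ(Xₖ)`. One more application of
the same inequality between times `0` and `1` turns `E[φ₁(X₁)]` into `φ₁(x₀)`.
-/

open MeasureTheory Set

namespace MeasureTheory.Martingale

variable {Ω : Type*} {m0 : MeasurableSpace Ω} {μ : Measure Ω} [IsFiniteMeasure μ]
  {ℱ : Filtration ℕ m0} {X : ℕ → Ω → ℝ}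

/-- The majorant `g` lets us compare with `E[g(Xᵢ)]` without knowing that `φ ∘ Xᵢ` is
integrable. -/
theorem integral_comp_le_of_concaveOn (hX : Martingale X ℱ μ) {i j : ℕ} (hij : i ≤ j)
    {φ g : ℝ → ℝ} (hφ : ConcaveOn ℝ univ φ) (hφg : ∀ y, φ y ≤ g y)
    (hφX : Integrable (fun ω => φ (X j ω)) μ) (hgX : Integrable (fun ω => g (X i ω)) μ) :
    ∫ ω, φ (X j ω) ∂μ ≤ ∫ ω, g (X i ω) ∂μ := by
  have hjensen : μ[φ ∘ X j | ℱ i] ≤ᵐ[μ] φ ∘ μ[X j | ℱ i] :=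
    hφ.condExp_map_le_univ (ℱ.le i) hφ.locallyLipschitz.continuous.upperSemicontinuous
      (hX.integrable j) hφX
  rw [← integral_condExp (ℱ.le i)]
  refine integral_mono_ae integrable_condExp hgX ?_
  filter_upwards [hjensen, hX.condExp_ae_eq hij] with ω hω hmart
  calc μ[φ ∘ X j | ℱ i] ω ≤ φ (μ[X j | ℱ i] ω) := hω
    _ = φ (X i ω) := by rw [hmart]
    _ ≤ g (X i ω) := hφg _

theorem integral_sum_Icc_le_of_concave_majorants (hX : Martingale X ℱ μ) {n : ℕ}
    {h φ : ℕ → ℝ → ℝ}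
    (hconc : ∀ k, 1 ≤ k → k ≤ n → ConcaveOn ℝ univ (φ k))
    (hlast : ∀ y, h n y ≤ φ n y)
    (hstep : ∀ k, 1 ≤ k → k < n → ∀ y, h k y + φ (k + 1) y ≤ φ k y)
    (hinth : ∀ k, 1 ≤ k → k ≤ n → Integrable (fun ω => h k (X k ω)) μ)
    (hintφ : ∀ k, 1 ≤ k → k ≤ n → Integrable (fun ω => φ k (X k ω)) μ)
    {k : ℕ} (hk : 1 ≤ k) (hkn : k ≤ n) :
    ∫ ω, ∑ i ∈ Finset.Icc k n, h i (X i ω) ∂μ ≤ ∫ ω, φ k (X k ω) ∂μ := by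
  induction hkn using Nat.decreasingInduction with
  | self => simpa using integral_mono (hinth n hk le_rfl) (hintφ n hk le_rfl) fun ω => hlast _
  | of_succ j hjn ih =>
    have hrest : Integrable (fun ω => ∑ i ∈ Finset.Icc (j + 1) n, h i (X i ω)) μ :=
      integrable_finsetSum _ fun i hi => hinth i (by grind) (Finset.mem_Icc.1 hi).2
    have hjensen : ∫ ω, φ (j + 1) (X (j + 1) ω) ∂μ ≤ ∫ ω, φ j (X j ω) - h j (X j ω) ∂μ :=
      hX.integral_comp_le_of_concaveOn (g := fun y => φ j y - h j y) (j.le_add_right 1)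
        (hconc (j + 1) (by omega) hjn) (fun y => by linarith [hstep j hk hjn y])
        (hintφ (j + 1) (by omega) hjn) ((hintφ j hk hjn.le).sub (hinth j hk hjn.le))
    calc ∫ ω, ∑ i ∈ Finset.Icc j n, h i (X i ω) ∂μ
        = ∫ ω, h j (X j ω) ∂μ + ∫ ω, ∑ i ∈ Finset.Icc (j + 1) n, h i (X i ω) ∂μ := by
          rw [← integral_add (hinth j hk hjn.le) hrest]
          simp_rw [← Finset.insert_Icc_add_one_left_eq_Icc hjn.le,
            Finset.sum_insert (by simp : j ∉ Finset.Icc (j + 1) n)]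
      _ ≤ ∫ ω, h j (X j ω) ∂μ + ∫ ω, φ j (X j ω) - h j (X j ω) ∂μ := by
          linarith [ih (by omega)]
      _ = ∫ ω, φ j (X j ω) ∂μ := by
          rw [integral_sub (hintφ j hk hjn.le) (hinth j hk hjn.le), add_sub_cancel]

end MeasureTheory.Martingale

theorem weak_duality_iterated_concave_general
    {Ω : Type*} {m0 : MeasurableSpace Ω} (μ : Measure Ω) [IsProbabilityMeasure μ]
    (ℱ : Filtration ℕ m0) (X : ℕ → Ω → ℝ) (hX : Martingale X ℱ μ)
    (x₀ : ℝ) (hstart : ∀ᵐ ω ∂μ, X 0 ω = x₀)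
    (n : ℕ) (hn : 1 ≤ n) (h φ : ℕ → ℝ → ℝ)
    (hconc : ∀ k, 1 ≤ k → k ≤ n → ConcaveOn ℝ Set.univ (φ k))
    (hlast : ∀ y, h n y ≤ φ n y)
    (hstep : ∀ k, 1 ≤ k → k < n → ∀ y, h k y + φ (k + 1) y ≤ φ k y)
    (hinth : ∀ k, 1 ≤ k → k ≤ n → Integrable (fun ω => h k (X k ω)) μ)
    (hintφ : ∀ k, 1 ≤ k → k ≤ n → Integrable (fun ω => φ k (X k ω)) μ) :
    ∫ ω, ∑ k ∈ Finset.Icc 1 n, h k (X k ω) ∂μ ≤ φ 1 x₀ := by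
  have hφX₀ : (fun ω => φ 1 (X 0 ω)) =ᵐ[μ] fun _ => φ 1 x₀ := by
    filter_upwards [hstart] with ω hω
    rw [hω]
  calc ∫ ω, ∑ k ∈ Finset.Icc 1 n, h k (X k ω) ∂μ ≤ ∫ ω, φ 1 (X 1 ω) ∂μ :=
        hX.integral_sum_Icc_le_of_concave_majorants hconc hlast hstep hinth hintφ le_rfl hn
    _ ≤ ∫ ω, φ 1 (X 0 ω) ∂μ :=
        hX.integral_comp_le_of_concaveOn zero_le_one (hconc 1 le_rfl hn) (fun _ => le_rfl)
          (hintφ 1 le_rfl hn) ((integrable_const _).congr hφX₀.symm)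
    _ = φ 1 x₀ := by simp [integral_congr_ae hφX₀]

/-- Weak duality (`d = 0` case): if `φ₁, …, φₙ` are concave with `φₙ ≥ hₙ` and
`φₖ ≥ hₖ + φₖ₊₁` pointwise, then for every martingale `(Xₖ)` with `X₀ = x₀` a.s. we have
`E[∑_{k=1}^n hₖ(Xₖ)] ≤ φ₁(x₀)`. -/
theorem weak_duality_iterated_concave
    {Ω : Type*} {m0 : MeasurableSpace Ω} (μ : Measure Ω) [IsProbabilityMeasure μ]
    (ℱ : Filtration ℕ m0) (X : ℕ → Ω → ℝ) (hX : Martingale X ℱ μ)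
    (x₀ : ℝ) (hstart : ∀ᵐ ω ∂μ, X 0 ω = x₀)
    (n : ℕ) (hn : 1 ≤ n) (h φ : ℕ → ℝ → ℝ)
    (hmeas : ∀ k, 1 ≤ k → k ≤ n → Measurable (h k))
    (hconc : ∀ k, 1 ≤ k → k ≤ n → ConcaveOn ℝ Set.univ (φ k))
    (hlast : ∀ y, h n y ≤ φ n y)
    (hstep : ∀ k, 1 ≤ k → k < n → ∀ y, h k y + φ (k + 1) y ≤ φ k y)
    (hinth : ∀ k, 1 ≤ k → k ≤ n → Integrable (fun ω => h k (X k ω)) μ)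
    (hintφ : ∀ k, 1 ≤ k → k ≤ n → Integrable (fun ω => φ k (X k ω)) μ) :
    ∫ ω, ∑ k ∈ Finset.Icc 1 n, h k (X k ω) ∂μ ≤ φ 1 x₀ :=
  weak_duality_iterated_concave_general μ ℱ X hX x₀ hstart n hn h φ hconc hlast hstep hinth hintφ
end

section
/- Let h : ℝ → ℝ be bounded above by an affine function and let ĥ be its concave envelope. For any x₀ ∈ ℝ and ε > 0 there exists a probability measure ℚ on ℝ supported on at most two points with barycenter x₀ (i.e., ∫ y dℚ(y) = x₀) such that ∫ h dℚ ≥ ĥ(x₀) − ε. -/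
/-!
Let `M` be the supremum of the chord values `p h(z₁) + (1 - p) h(z₂)` over all two-point
splittings `p z₁ + (1 - p) z₂ = x₀`; it is finite thanks to the affine bound on `h`. Comparing a
chord on each side of `x₀` with `M` shows that every right slope `(h z - M)/(z - x₀)` is at most
every left slope, so a line through `(x₀, M)` with a slope in between dominates `h`. Hence
`ĥ(x₀) ≤ M`, and a chord value above `M - ε` is the integral of `h` against the corresponding
two-point measure.
-/

open MeasureTheory

noncomputable def concaveEnvelope (h : ℝ → ℝ) : ℝ → ℝ := fun x =>
  sInf {v : ℝ | ∃ g : ℝ → ℝ, ConcaveOn ℝ Set.univ g ∧ (∀ z, h z ≤ g z) ∧ g x = v}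

theorem concaveEnvelope_le_of_concaveOn {h g : ℝ → ℝ} (hg : ConcaveOn ℝ Set.univ g)
    (hhg : ∀ z, h z ≤ g z) (x : ℝ) : concaveEnvelope h x ≤ g x :=
  csInf_le ⟨h x, by rintro v ⟨g', -, hhg', rfl⟩; exact hhg' x⟩ ⟨g, hg, hhg, rfl⟩

theorem concaveOn_affine (c b : ℝ) : ConcaveOn ℝ Set.univ fun z : ℝ => c + b * z :=
  (concaveOn_const c convex_univ).add ((LinearMap.mul ℝ ℝ b).concaveOn convex_univ)

section ChordValues

variable (h : ℝ → ℝ) (x₀ : ℝ)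

def chordValuesAt : Set ℝ :=
  {y | ∃ p z₁ z₂ : ℝ, 0 ≤ p ∧ p ≤ 1 ∧ p * z₁ + (1 - p) * z₂ = x₀ ∧
    y = p * h z₁ + (1 - p) * h z₂}

theorem apply_mem_chordValuesAt : h x₀ ∈ chordValuesAt h x₀ :=
  ⟨1, x₀, x₀, zero_le_one, le_rfl, by ring, by ring⟩

theorem bddAbove_chordValuesAt {α β : ℝ} (hb : ∀ x, h x ≤ α + β * x) :
    BddAbove (chordValuesAt h x₀) := by
  refine ⟨α + β * x₀, ?_⟩
  rintro y ⟨p, z₁, z₂, hp₀, hp₁, rfl, rfl⟩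
  nlinarith [mul_le_mul_of_nonneg_left (hb z₁) hp₀,
    mul_le_mul_of_nonneg_left (hb z₂) (sub_nonneg.mpr hp₁)]

variable {h x₀} {M : ℝ} (hM : M ∈ upperBounds (chordValuesAt h x₀))
include hM

theorem slope_right_le_slope_left_of_chordValuesAt_le {z₁ z₂ : ℝ} (hz₁ : z₁ < x₀)
    (hz₂ : x₀ < z₂) : (h z₂ - M) / (z₂ - x₀) ≤ (M - h z₁) / (x₀ - z₁) := by
  have hd : 0 < z₂ - z₁ := by linarith
  set p := (z₂ - x₀) / (z₂ - z₁) with hp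
  have hchord : p * h z₁ + (1 - p) * h z₂ ≤ M := by
    refine hM ⟨p, z₁, z₂, by positivity, ?_, ?_, rfl⟩
    · rw [div_le_one hd]; linarith
    · rw [hp]; field_simp; ring
  have hscaled : (z₂ - z₁) * (p * h z₁ + (1 - p) * h z₂) =
      (z₂ - x₀) * h z₁ + (x₀ - z₁) * h z₂ := by
    rw [hp]; field_simp; ring
  rw [div_le_div_iff₀ (by linarith) (by linarith)]
  nlinarith [mul_le_mul_of_nonneg_left hchord hd.le]

theorem exists_affine_majorant_of_chordValuesAt_le :
    ∃ b : ℝ, ∀ z, h z ≤ M + b * (z - x₀) := by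
  set slopes := (fun z => (h z - M) / (z - x₀)) '' Set.Ioi x₀
  have hne : slopes.Nonempty := (Set.nonempty_Ioi).image _
  refine ⟨sSup slopes, fun z => ?_⟩
  rcases lt_trichotomy z x₀ with hlt | rfl | hgt
  · have hle : sSup slopes ≤ (M - h z) / (x₀ - z) := csSup_le hne <| by
      rintro _ ⟨z₂, hz₂, rfl⟩
      exact slope_right_le_slope_left_of_chordValuesAt_le hM hlt hz₂
    have := (le_div_iff₀ (sub_pos.mpr hlt)).mp hle
    nlinarith
  · simpa using hM (apply_mem_chordValuesAt h z)
  · have hbdd : BddAbove slopes := ⟨(M - h (x₀ - 1)) / (x₀ - (x₀ - 1)), by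
      rintro _ ⟨z₂, hz₂, rfl⟩
      exact slope_right_le_slope_left_of_chordValuesAt_le hM (by linarith) hz₂⟩
    have := (div_le_iff₀ (sub_pos.mpr hgt)).mp (le_csSup hbdd ⟨z, hgt, rfl⟩)
    nlinarith

theorem concaveEnvelope_le_of_chordValuesAt_le : concaveEnvelope h x₀ ≤ M := by
  obtain ⟨b, hb⟩ := exists_affine_majorant_of_chordValuesAt_le hM
  have hg := concaveOn_affine (M - b * x₀) b
  calc concaveEnvelope h x₀ ≤ M - b * x₀ + b * x₀ :=
        concaveEnvelope_le_of_concaveOn hg (fun z => by linarith [hb z]) x₀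
    _ = M := by ring

end ChordValues

section TwoPointMeasure

variable {X : Type*} [MeasurableSpace X]

noncomputable def twoPointMeasure (p : ℝ) (z₁ z₂ : X) : Measure X :=
  ENNReal.ofReal p • Measure.dirac z₁ + ENNReal.ofReal (1 - p) • Measure.dirac z₂

variable {p : ℝ} (z₁ z₂ : X)

theorem twoPointMeasure_compl_pair [MeasurableSingletonClass X] [DecidableEq X] :
    twoPointMeasure p z₁ z₂ ((↑({z₁, z₂} : Finset X) : Set X)ᶜ) = 0 := by
  simp [twoPointMeasure]

theorem isProbabilityMeasure_twoPointMeasure (hp₀ : 0 ≤ p) (hp₁ : p ≤ 1) :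
    IsProbabilityMeasure (twoPointMeasure p z₁ z₂) :=
  ⟨by simp [twoPointMeasure, ← ENNReal.ofReal_add hp₀ (sub_nonneg.mpr hp₁)]⟩

theorem integral_twoPointMeasure [MeasurableSingletonClass X] (hp₀ : 0 ≤ p) (hp₁ : p ≤ 1)
    (f : X → ℝ) :
    ∫ y, f y ∂twoPointMeasure p z₁ z₂ = p * f z₁ + (1 - p) * f z₂ := by
  have hint (c : ℝ) (z : X) : Integrable f (ENNReal.ofReal c • Measure.dirac z) :=
    (integrable_dirac enorm_lt_top).smul_measure ENNReal.ofReal_ne_top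
  rw [twoPointMeasure, integral_add_measure (hint _ _) (hint _ _), integral_smul_measure,
    integral_smul_measure, integral_dirac, integral_dirac, ENNReal.toReal_ofReal hp₀,
    ENNReal.toReal_ofReal (sub_nonneg.mpr hp₁), smul_eq_mul, smul_eq_mul]

end TwoPointMeasure

/-- For `h` bounded above by an affine function, the concave envelope value at `x₀` is
`ε`-attained by integrating `h` against a probability measure supported on at most two points
with barycenter `x₀`. -/
theorem concaveEnvelope_approx_two_point_measure (h : ℝ → ℝ) (α β : ℝ)
    (hb : ∀ x, h x ≤ α + β * x) (x₀ : ℝ) (ε : ℝ) (hε : 0 < ε) :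
    ∃ Q : Measure ℝ, IsProbabilityMeasure Q ∧
      (∃ s : Finset ℝ, s.card ≤ 2 ∧ Q ((↑s : Set ℝ)ᶜ) = 0) ∧
      (∫ y, y ∂Q) = x₀ ∧
      concaveEnvelope h x₀ - ε ≤ ∫ y, h y ∂Q := by
  classical
  have hbdd := bddAbove_chordValuesAt h x₀ hb
  have henv : concaveEnvelope h x₀ ≤ sSup (chordValuesAt h x₀) :=
    concaveEnvelope_le_of_chordValuesAt_le fun _ => le_csSup hbdd
  obtain ⟨_, ⟨p, z₁, z₂, hp₀, hp₁, hbar, rfl⟩, hclose⟩ :=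
    exists_lt_of_lt_csSup ⟨_, apply_mem_chordValuesAt h x₀⟩
      (sub_lt_self (sSup (chordValuesAt h x₀)) hε)
  refine ⟨twoPointMeasure p z₁ z₂, isProbabilityMeasure_twoPointMeasure z₁ z₂ hp₀ hp₁,
    ⟨{z₁, z₂}, Finset.card_le_two, twoPointMeasure_compl_pair z₁ z₂⟩, ?_, ?_⟩
  · exact (integral_twoPointMeasure z₁ z₂ hp₀ hp₁ id).trans hbar
  · rw [integral_twoPointMeasure z₁ z₂ hp₀ hp₁ h]
    linarith
end

section
/- Define functions recursively: φₙ★ is the concave envelope of hₙ, and for k = n−1, …, 1, φₖ★ is the concave envelope of hₖ + φₖ₊₁★, where each hₖ : ℝ → ℝ is continuous and bounded above by an affine function. Then for every x₀ ∈ ℝ and ε > 0 there exists a martingale (X₀,…,Xₙ) with X₀ = x₀ a.s., each Xₖ taking at most 2ᵏ values, such that φ₁★(x₀) ≤ E[∑ₖ₌₁ⁿ hₖ(Xₖ)] + n·ε. -/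
open MeasureTheory

/-- A martingale `(Xₖ)` on some probability space with `X₀ = x₀` almost surely. -/
structure MartingaleStartingAt (x₀ : ℝ) where
  Ω : Type
  m0 : MeasurableSpace Ω
  μ : @Measure Ω m0
  prob : @IsProbabilityMeasure Ω m0 μ
  F : @Filtration Ω ℕ _ m0
  X : ℕ → Ω → ℝ
  mart : @Martingale Ω ℝ ℕ _ m0 _ _ X F μ
  start : ∀ᵐ ω ∂μ, X 0 ω = x₀

/-!
If every two-point split `t δ_{y₁} + (1 - t) δ_{y₂}` of `x` gave `g` an average below
`concaveEnvelope g x - ε`, the chord inequalities between left and right slopes would yield an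
affine majorant of `g` through `(x, concaveEnvelope g x - ε)`, contradicting minimality of the
envelope. So every state admits an `ε`-optimal split with mean `x`. Choosing one for each time and
state and running them forward from `x₀` grows a binary tree of paths: each node is the mean of its
two children, so the coordinates form a martingale with at most `2ᵏ` values at time `k`, and the
value function `φ` loses at most `ε` per step.
-/

open Set ProbabilityTheory

/-- The law `t δ_{y₁} + (1 - t) δ_{y₂}`, whose mean is `x`. -/
structure TwoPointSplit (x : ℝ) where
  t : ℝ
  y₁ : ℝ
  y₂ : ℝ
  t_nonneg : 0 ≤ t
  t_le_one : t ≤ 1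
  mean_eq : t * y₁ + (1 - t) * y₂ = x

namespace TwoPointSplit

variable {x : ℝ}

def avg (s : TwoPointSplit x) (f : ℝ → ℝ) : ℝ := s.t * f s.y₁ + (1 - s.t) * f s.y₂

def dirac (x : ℝ) : TwoPointSplit x := ⟨1, x, x, zero_le_one, le_rfl, by ring⟩

@[simp] lemma avg_dirac (f : ℝ → ℝ) : (dirac x).avg f = f x := by simp [avg, dirac]

lemma avg_const (s : TwoPointSplit x) (c : ℝ) : s.avg (fun _ => c) = c := by
  simp only [avg]; ring

lemma avg_mul_id (s : TwoPointSplit x) (c : ℝ) : s.avg (fun y => c * y) = c * x := by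
  simp only [avg]; linear_combination c * s.mean_eq

lemma avg_add_const (s : TwoPointSplit x) (f : ℝ → ℝ) (c : ℝ) :
    s.avg (fun y => c + f y) = c + s.avg f := by
  simp only [avg]; ring

noncomputable def ofLt {y₁ y₂ : ℝ} (h₁ : y₁ < x) (h₂ : x < y₂) : TwoPointSplit x where
  t := (y₂ - x) / (y₂ - y₁)
  y₁ := y₁
  y₂ := y₂
  t_nonneg := div_nonneg (by linarith) (by linarith)
  t_le_one := (div_le_one (by linarith)).2 (by linarith)
  mean_eq := by
    have : y₂ - y₁ ≠ 0 := by linarith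
    field_simp
    ring

lemma avg_ofLt {y₁ y₂ : ℝ} (h₁ : y₁ < x) (h₂ : x < y₂) (f : ℝ → ℝ) :
    (ofLt h₁ h₂).avg f * (y₂ - y₁) = (y₂ - x) * f y₁ + (x - y₁) * f y₂ := by
  have : y₂ - y₁ ≠ 0 := by linarith
  simp only [avg, ofLt]
  field_simp
  ring

variable {α : Type*} [MeasurableSpace α]

/-- Built from Dirac masses rather than `Measure.map`, so `f` need not be measurable. -/
noncomputable def mapLaw (s : TwoPointSplit x) (f : ℝ → α) : Measure α :=
  ENNReal.ofReal s.t • Measure.dirac (f s.y₁) + ENNReal.ofReal (1 - s.t) • Measure.dirac (f s.y₂)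

instance (s : TwoPointSplit x) (f : ℝ → α) : IsProbabilityMeasure (s.mapLaw f) where
  measure_univ := by
    simp only [mapLaw, Measure.add_apply, Measure.smul_apply, measure_univ, smul_eq_mul, mul_one]
    rw [← ENNReal.ofReal_add s.t_nonneg (by linarith [s.t_le_one])]
    simp

lemma ae_mapLaw (s : TwoPointSplit x) (f : ℝ → α) {P : α → Prop} [MeasurableSingletonClass α]
    (h₁ : P (f s.y₁)) (h₂ : P (f s.y₂)) : ∀ᵐ a ∂s.mapLaw f, P a := by
  simp only [mapLaw, ae_add_measure_iff]
  exact ⟨Measure.ae_smul_measure (by simpa [ae_dirac_eq] using h₁) _,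
    Measure.ae_smul_measure (by simpa [ae_dirac_eq] using h₂) _⟩

lemma integral_mapLaw [MeasurableSingletonClass α] (s : TwoPointSplit x) (f : ℝ → α) (F : α → ℝ) :
    ∫ a, F a ∂s.mapLaw f = s.avg (fun y => F (f y)) := by
  have hint (y : ℝ) (c : ℝ) :
      Integrable F (ENNReal.ofReal c • Measure.dirac (f y)) :=
    (integrable_dirac enorm_lt_top).smul_measure ENNReal.ofReal_ne_top
  rw [mapLaw, integral_add_measure (hint _ _) (hint _ _), integral_smul_measure,
    integral_smul_measure, integral_dirac, integral_dirac, ENNReal.toReal_ofReal s.t_nonneg,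
    ENNReal.toReal_ofReal (by linarith [s.t_le_one])]
  rfl

end TwoPointSplit

section ConcaveEnvelope

variable {g : ℝ → ℝ}

theorem concaveEnvelope_le {G : ℝ → ℝ} (hG : ConcaveOn ℝ univ G) (hgG : ∀ z, g z ≤ G z)
    (x : ℝ) : concaveEnvelope g x ≤ G x :=
  csInf_le ⟨g x, by rintro _ ⟨G', -, hG', rfl⟩; exact hG' x⟩ ⟨G, hG, hgG, rfl⟩

theorem exists_affine_majorant_of_avg_le {x v : ℝ}
    (h : ∀ s : TwoPointSplit x, s.avg g ≤ v) : ∃ m : ℝ, ∀ z, g z ≤ v + m * (z - x) := by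
  have chord : ∀ y₁ y₂, y₁ < x → x < y₂ →
      (g y₂ - v) / (y₂ - x) ≤ (v - g y₁) / (x - y₁) := by
    intro y₁ y₂ h₁ h₂
    have := mul_le_mul_of_nonneg_right (h (.ofLt h₁ h₂)) (by linarith : 0 ≤ y₂ - y₁)
    rw [TwoPointSplit.avg_ofLt] at this
    rw [div_le_div_iff₀ (by linarith) (by linarith)]
    linear_combination this
  set slopes := (fun y => (g y - v) / (y - x)) '' Ioi x
  have bdd : BddAbove slopes := ⟨(v - g (x - 1)) / (x - (x - 1)), by
    rintro _ ⟨y, hy, rfl⟩; exact chord _ _ (by linarith) hy⟩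
  refine ⟨sSup slopes, fun z => ?_⟩
  rcases lt_trichotomy z x with hz | rfl | hz
  · have : sSup slopes ≤ (v - g z) / (x - z) :=
      csSup_le (nonempty_Ioi.image _) (by rintro _ ⟨y, hy, rfl⟩; exact chord _ _ hz hy)
    rw [le_div_iff₀ (by linarith)] at this
    linarith
  · simpa using h (.dirac z)
  · have : (g z - v) / (z - x) ≤ sSup slopes := le_csSup bdd ⟨z, hz, rfl⟩
    rw [div_le_iff₀ (by linarith)] at this
    linarith

theorem exists_avg_add_ge_concaveEnvelope (x : ℝ) {ε : ℝ} (hε : 0 < ε) :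
    ∃ s : TwoPointSplit x, concaveEnvelope g x ≤ s.avg g + ε := by
  by_contra! hlt
  obtain ⟨m, hm⟩ := exists_affine_majorant_of_avg_le
    (v := concaveEnvelope g x - ε) fun s => by linarith [hlt s]
  have affine_concave : ConcaveOn ℝ univ fun z => concaveEnvelope g x - ε + m * (z - x) :=
    ⟨convex_univ, fun _ _ _ _ a b _ _ hab => le_of_eq <| by
      simp only [smul_eq_mul]; linear_combination (concaveEnvelope g x - ε - m * x) * hab⟩
  have := concaveEnvelope_le affine_concave hm x
  simp only [sub_self, mul_zero, add_zero] at this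
  linarith

end ConcaveEnvelope

theorem MeasureTheory.Integrable.of_ae_mem_finset {α : Type*} [MeasurableSpace α]
    [DiscreteMeasurableSpace α] {μ : Measure α} [IsFiniteMeasure μ] {S : Finset α}
    (hS : ∀ᵐ a ∂μ, a ∈ S) (f : α → ℝ) : Integrable f μ :=
  .of_bound Measurable.of_discrete.aestronglyMeasurable (∑ a ∈ S, ‖f a‖)
    (hS.mono fun _ ha => Finset.single_le_sum (fun _ _ => norm_nonneg _) ha)

theorem MeasureTheory.Measure.integral_comp {α β : Type*} [MeasurableSpace α] [MeasurableSpace β]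
    {κ : Kernel α β} {μ : Measure α} {f : β → ℝ} (hf : Integrable f (κ ∘ₘ μ)) :
    ∫ b, f b ∂(κ ∘ₘ μ) = ∫ a, ∫ b, f b ∂κ a ∂μ := by
  rw [Measure.comp_eq_comp_const_apply] at hf ⊢
  rw [Kernel.integral_comp hf]
  simp

/-- Every set is measurable: the tree measures below are finitely supported. -/
def PathSpace : Type := ℕ → ℝ

namespace PathSpace

instance : MeasurableSpace PathSpace := ⊤

instance : DiscreteMeasurableSpace PathSpace := ⟨fun _ => MeasurableSpace.measurableSet_top⟩

noncomputable instance : DecidableEq PathSpace := Classical.decEq _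

def const (x : ℝ) : PathSpace := fun _ => x

def extend (k : ℕ) (ω : PathSpace) (y : ℝ) : PathSpace := fun j => if j ≤ k then ω j else y

def freeze (k : ℕ) (ω : PathSpace) : PathSpace := fun j => ω (min j k)

lemma extend_apply_of_le {k j : ℕ} (h : j ≤ k) (ω : PathSpace) (y : ℝ) : extend k ω y j = ω j :=
  if_pos h

@[simp] lemma extend_apply_succ (k : ℕ) (ω : PathSpace) (y : ℝ) : extend k ω y (k + 1) = y :=
  if_neg (by omega)

lemma freeze_apply_of_le {k j : ℕ} (h : j ≤ k) (ω : PathSpace) : freeze k ω j = ω j := by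
  simp [freeze, h]

lemma freeze_extend {k m : ℕ} (h : k ≤ m) (ω : PathSpace) (y : ℝ) :
    freeze k (extend m ω y) = freeze k ω :=
  funext fun _ => extend_apply_of_le (by omega) ω y

lemma freeze_freeze {i j : ℕ} (h : i ≤ j) (ω : PathSpace) : freeze i (freeze j ω) = freeze i ω :=
  funext fun _ => freeze_apply_of_le (by omega) ω

variable (σ : ℕ → (x : ℝ) → TwoPointSplit x) (x₀ : ℝ)

noncomputable def splitKernel (k : ℕ) : Kernel PathSpace PathSpace where
  toFun ω := (σ k (ω k)).mapLaw (extend k ω)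
  measurable' := Measurable.of_discrete

instance (k : ℕ) : IsMarkovKernel (splitKernel σ k) :=
  ⟨fun ω => inferInstanceAs (IsProbabilityMeasure ((σ k (ω k)).mapLaw (extend k ω)))⟩

noncomputable def treeMeasure : ℕ → Measure PathSpace
  | 0 => Measure.dirac (const x₀)
  | k + 1 => splitKernel σ k ∘ₘ treeMeasure k

instance (k : ℕ) : IsProbabilityMeasure (treeMeasure σ x₀ k) := by
  induction k with
  | zero => rw [treeMeasure]; infer_instance
  | succ k ih => rw [treeMeasure]; infer_instance

noncomputable def treeSupport : ℕ → Finset PathSpace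
  | 0 => {const x₀}
  | k + 1 => (treeSupport k).image (fun ω => extend k ω (σ k (ω k)).y₁) ∪
      (treeSupport k).image (fun ω => extend k ω (σ k (ω k)).y₂)

lemma ae_mem_treeSupport (k : ℕ) : ∀ᵐ ω ∂treeMeasure σ x₀ k, ω ∈ treeSupport σ x₀ k := by
  induction k with
  | zero => simp [treeMeasure, treeSupport]
  | succ k ih =>
    rw [treeMeasure, treeSupport]
    refine Measure.ae_comp_of_ae_ae (MeasurableSet.of_discrete) ?_
    filter_upwards [ih] with ω hω
    exact TwoPointSplit.ae_mapLaw _ _ (Finset.mem_union_left _ (Finset.mem_image_of_mem _ hω))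
      (Finset.mem_union_right _ (Finset.mem_image_of_mem _ hω))

lemma card_treeSupport_le (k : ℕ) : (treeSupport σ x₀ k).card ≤ 2 ^ k := by
  induction k with
  | zero => simp [treeSupport]
  | succ k ih =>
    rw [treeSupport, pow_succ]
    grw [Finset.card_union_le, Finset.card_image_le, Finset.card_image_le, ih]
    omega

lemma image_treeSupport_subset {k m : ℕ} (h : k ≤ m) :
    (treeSupport σ x₀ m).image (· k) ⊆ (treeSupport σ x₀ k).image (· k) := by
  induction m, h using Nat.le_induction with
  | base => rfl
  | succ m hkm ih =>
    refine subset_trans ?_ ih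
    rw [treeSupport]
    intro z
    simp only [Finset.mem_image, Finset.mem_union]
    rintro ⟨_, ⟨ω, hω, rfl⟩ | ⟨ω, hω, rfl⟩, rfl⟩ <;>
      exact ⟨ω, hω, (extend_apply_of_le hkm ω _).symm⟩

lemma ae_apply_mem_image_treeSupport {k n : ℕ} (h : k ≤ n) :
    ∀ᵐ ω ∂treeMeasure σ x₀ n, ω k ∈ (treeSupport σ x₀ k).image (· k) := by
  filter_upwards [ae_mem_treeSupport σ x₀ n] with ω hω
  exact image_treeSupport_subset σ x₀ h (Finset.mem_image_of_mem _ hω)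

lemma integrable_treeMeasure (k : ℕ) (f : PathSpace → ℝ) : Integrable f (treeMeasure σ x₀ k) :=
  .of_ae_mem_finset (ae_mem_treeSupport σ x₀ k) f

lemma integral_treeMeasure_succ (k : ℕ) (f : PathSpace → ℝ) :
    ∫ ω, f ω ∂treeMeasure σ x₀ (k + 1) =
      ∫ ω, (σ k (ω k)).avg (fun y => f (extend k ω y)) ∂treeMeasure σ x₀ k := by
  have := integrable_treeMeasure σ x₀ (k + 1) f
  rw [treeMeasure] at this ⊢
  rw [Measure.integral_comp this]
  exact integral_congr_ae (ae_of_all _ fun ω => TwoPointSplit.integral_mapLaw _ _ f)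

lemma integral_treeMeasure_of_le {k m : ℕ} (h : k ≤ m) {f : PathSpace → ℝ}
    (hf : ∀ ω, f (freeze k ω) = f ω) :
    ∫ ω, f ω ∂treeMeasure σ x₀ m = ∫ ω, f ω ∂treeMeasure σ x₀ k := by
  induction m, h using Nat.le_induction with
  | base => rfl
  | succ m hkm ih =>
    have (ω : PathSpace) (y : ℝ) : f (extend m ω y) = f ω := by
      rw [← hf, freeze_extend hkm, hf]
    simp only [integral_treeMeasure_succ, this, TwoPointSplit.avg_const, ih]

def freezeFiltration : Filtration ℕ (inferInstance : MeasurableSpace PathSpace) where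
  seq i := MeasurableSpace.comap (freeze i) ⊤
  mono' i j hij := by
    rintro _ ⟨t, -, rfl⟩
    exact ⟨freeze i ⁻¹' t, trivial, by ext ω; simp [freeze_freeze hij]⟩
  le' _ := le_top

lemma integral_mul_succ_treeMeasure {i n : ℕ} (hin : i < n) {g : PathSpace → ℝ}
    (hg : ∀ ω, g (freeze i ω) = g ω) :
    ∫ ω, g ω * ω (i + 1) ∂treeMeasure σ x₀ n = ∫ ω, g ω * ω i ∂treeMeasure σ x₀ n := by
  have hg_extend (ω : PathSpace) (y : ℝ) : g (extend i ω y) = g ω := by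
    rw [← hg, freeze_extend le_rfl, hg]
  rw [integral_treeMeasure_of_le σ x₀ hin (f := fun ω => g ω * ω (i + 1)), integral_treeMeasure_succ,
    integral_treeMeasure_of_le σ x₀ hin.le (f := fun ω => g ω * ω i)]
  · simp only [hg_extend, extend_apply_succ, TwoPointSplit.avg_mul_id]
  · intro ω; rw [hg, freeze_apply_of_le le_rfl]
  · intro ω; rw [← hg (freeze _ ω), freeze_freeze i.le_succ, hg, freeze_apply_of_le le_rfl]

theorem martingale_treeMeasure (n : ℕ) :
    Martingale (fun k ω => ω (min k n)) freezeFiltration (treeMeasure σ x₀ n) := by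
  refine martingale_of_setIntegral_eq_succ (fun i => ?_) (fun i => integrable_treeMeasure σ x₀ n _)
    fun i s hs => ?_
  · have : (fun ω : PathSpace => ω (min i n)) = (fun ω => ω (min i n)) ∘ freeze i :=
      funext fun ω => (freeze_apply_of_le (min_le_left i n) ω).symm
    rw [this]
    exact (Measurable.of_discrete.comp (comap_measurable _)).stronglyMeasurable
  · obtain ⟨t, -, rfl⟩ := hs
    rcases lt_or_ge i n with hin | hni
    · have (k : ℕ) : ∫ ω in freeze i ⁻¹' t, ω k ∂treeMeasure σ x₀ n =
          ∫ ω, t.indicator 1 (freeze i ω) * ω k ∂treeMeasure σ x₀ n := by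
        rw [← integral_indicator MeasurableSet.of_discrete]
        congr 1; funext ω
        by_cases hω : freeze i ω ∈ t <;> simp [hω]
      simp only [min_eq_left hin.le, min_eq_left (Nat.succ_le_of_lt hin), this]
      refine (integral_mul_succ_treeMeasure σ x₀ hin fun ω => ?_).symm
      rw [freeze_freeze le_rfl]
    · simp only [min_eq_right hni, min_eq_right (hni.trans i.le_succ)]

noncomputable def treeMartingale (n : ℕ) : MartingaleStartingAt x₀ where
  Ω := PathSpace
  m0 := inferInstance
  μ := treeMeasure σ x₀ n
  prob := inferInstance
  F := freezeFiltration
  X k ω := ω (min k n)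
  mart := martingale_treeMeasure σ x₀ n
  start := by simpa [treeSupport, const] using ae_apply_mem_image_treeSupport σ x₀ n.zero_le

section Value

variable {h V : ℕ → ℝ → ℝ} {ε : ℝ}

lemma integral_le_integral_treeMeasure_succ {k : ℕ}
    (hσ : ∀ x, V (k + 1) x ≤ (σ k x).avg (fun y => h (k + 1) y + V (k + 2) y) + ε) :
    ∫ ω, (∑ j ∈ Finset.Icc 1 k, h j (ω j) + V (k + 1) (ω k)) ∂treeMeasure σ x₀ k ≤
      ∫ ω, (∑ j ∈ Finset.Icc 1 (k + 1), h j (ω j) + V (k + 2) (ω (k + 1)))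
        ∂treeMeasure σ x₀ (k + 1) + ε := by
  have hsum (ω : PathSpace) (y : ℝ) :
      ∑ j ∈ Finset.Icc 1 (k + 1), h j (extend k ω y j) + V (k + 2) (extend k ω y (k + 1)) =
        ∑ j ∈ Finset.Icc 1 k, h j (ω j) + (h (k + 1) y + V (k + 2) y) := by
    rw [Finset.sum_Icc_succ_top (by omega), extend_apply_succ, add_assoc]
    congr 1
    exact Finset.sum_congr rfl fun j hj => by rw [extend_apply_of_le (Finset.mem_Icc.1 hj).2]
  rw [integral_treeMeasure_succ]
  simp only [hsum, TwoPointSplit.avg_add_const]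
  calc _ ≤ ∫ ω, (∑ j ∈ Finset.Icc 1 k, h j (ω j) +
          (σ k (ω k)).avg (fun y => h (k + 1) y + V (k + 2) y) + ε) ∂treeMeasure σ x₀ k :=
        integral_mono (integrable_treeMeasure σ x₀ k _) (integrable_treeMeasure σ x₀ k _)
          fun ω => by linarith [hσ (ω k)]
    _ = _ := by
      rw [integral_add (integrable_treeMeasure σ x₀ k _) (integrable_const ε), integral_const,
        probReal_univ, one_smul]

theorem le_integral_sum_treeMeasure {n : ℕ}
    (hσ : ∀ k < n, ∀ x, V (k + 1) x ≤ (σ k x).avg (fun y => h (k + 1) y + V (k + 2) y) + ε)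
    (hV : ∀ x, V (n + 1) x = 0) :
    V 1 x₀ ≤ ∫ ω, ∑ j ∈ Finset.Icc 1 n, h j (ω j) ∂treeMeasure σ x₀ n + n * ε := by
  have telescope : ∀ k ≤ n, V 1 x₀ ≤
      ∫ ω, (∑ j ∈ Finset.Icc 1 k, h j (ω j) + V (k + 1) (ω k)) ∂treeMeasure σ x₀ k + k * ε := by
    intro k hk
    induction k with
    | zero => simp [treeMeasure, const]
    | succ k ih =>
      push_cast
      linarith [ih (by omega), integral_le_integral_treeMeasure_succ σ x₀ (hσ k hk)]
  simpa [hV] using telescope n le_rfl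

end Value

end PathSpace

open PathSpace

theorem iterated_concave_envelope_approx_martingale_general (n : ℕ) (hn : 1 ≤ n)
    (h : ℕ → ℝ → ℝ)
    (φ : ℕ → ℝ → ℝ) (hφn : φ n = concaveEnvelope (h n))
    (hφk : ∀ k, 1 ≤ k → k < n → φ k = concaveEnvelope (fun y => h k y + φ (k + 1) y))
    (x₀ : ℝ) (ε : ℝ) (hε : 0 < ε) :
    ∃ M : MartingaleStartingAt x₀,
      (∀ k ≤ n, ∃ s : Finset ℝ, s.card ≤ 2 ^ k ∧ ∀ᵐ ω ∂M.μ, M.X k ω ∈ s) ∧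
      φ 1 x₀ ≤ (∫ ω, ∑ k ∈ Finset.Icc 1 n, h k (M.X k ω) ∂M.μ) + n * ε := by
  set V : ℕ → ℝ → ℝ := fun k => if k ≤ n then φ k else 0
  have hV : ∀ k < n, V (k + 1) = concaveEnvelope fun y => h (k + 1) y + V (k + 2) y := by
    intro k hk
    rcases (Nat.succ_le_of_lt hk).eq_or_lt with hkn | hkn
    · subst hkn
      simp [V, hφn]
    · simp [V, hφk (k + 1) (by omega) hkn, Nat.succ_le_of_lt hkn, hkn.le]
  choose σ hσ using fun k x =>
    exists_avg_add_ge_concaveEnvelope (g := fun y => h (k + 1) y + V (k + 2) y) x hε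
  have hval := le_integral_sum_treeMeasure σ x₀ (fun k hk x => hV k hk ▸ hσ k x)
    (fun x => by simp [V])
  refine ⟨treeMartingale σ x₀ n, fun k hk => ⟨(treeSupport σ x₀ k).image (· k),
    Finset.card_image_le.trans (card_treeSupport_le σ x₀ k), ?_⟩, ?_⟩
  · show ∀ᵐ ω ∂treeMeasure σ x₀ n, ω (min k n) ∈ _
    simpa only [min_eq_left hk] using ae_apply_mem_image_treeSupport σ x₀ hk
  · show φ 1 x₀ ≤ ∫ ω, ∑ k ∈ Finset.Icc 1 n, h k (ω (min k n)) ∂treeMeasure σ x₀ n + n * ε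
    have hmin (ω : PathSpace) : ∑ k ∈ Finset.Icc 1 n, h k (ω (min k n)) =
        ∑ k ∈ Finset.Icc 1 n, h k (ω k) :=
      Finset.sum_congr rfl fun k hk => by rw [min_eq_left (Finset.mem_Icc.1 hk).2]
    simpa only [hmin, V, if_pos hn] using hval

/-- Strong-duality construction (`d = 0` case): with `φₙ★` the concave envelope of `hₙ` and
`φₖ★` the concave envelope of `hₖ + φₖ₊₁★`, for every `x₀` and `ε > 0` there is a martingale
`(X₀, …, Xₙ)` with `X₀ = x₀` a.s., each `Xₖ` taking at most `2ᵏ` values, such that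
`φ₁★(x₀) ≤ E[∑_{k=1}^n hₖ(Xₖ)] + n ε`. -/
theorem iterated_concave_envelope_approx_martingale (n : ℕ) (hn : 1 ≤ n)
    (h : ℕ → ℝ → ℝ) (hcont : ∀ k, 1 ≤ k → k ≤ n → Continuous (h k))
    (α β : ℕ → ℝ) (hb : ∀ k, 1 ≤ k → k ≤ n → ∀ x, h k x ≤ α k + β k * x)
    (φ : ℕ → ℝ → ℝ) (hφn : φ n = concaveEnvelope (h n))
    (hφk : ∀ k, 1 ≤ k → k < n → φ k = concaveEnvelope (fun y => h k y + φ (k + 1) y))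
    (x₀ : ℝ) (ε : ℝ) (hε : 0 < ε) :
    ∃ M : MartingaleStartingAt x₀,
      (∀ k ≤ n, ∃ s : Finset ℝ, s.card ≤ 2 ^ k ∧ ∀ᵐ ω ∂M.μ, M.X k ω ∈ s) ∧
      φ 1 x₀ ≤ (∫ ω, ∑ k ∈ Finset.Icc 1 n, h k (M.X k ω) ∂M.μ) + n * ε :=
  iterated_concave_envelope_approx_martingale_general n hn h φ hφn hφk x₀ ε hε
end

section
/- Let f, g : ℝ → ℝ with g bounded above by an affine function, and suppose there exists a finitely-supported probability measure ℚ₀ on ℝ with barycenter x₀ such that ∫ g dℚ₀ > 0 (Slater's condition). Define p̄ = sup { ∫ f dμ : μ finitely-supported probability measure with barycenter x₀ and ∫ g dμ ≥ 0 } and d̄ = inf_{λ ≥ 0} sup { ∫ (f + λg) dμ : μ finitely-supported probability measure with barycenter x₀ }. If f is bounded above by an affine function, then p̄ = d̄. -/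
open MeasureTheory

/-! The pairs `(∫ f dμ, ∫ g dμ)` over finitely supported probability measures with barycenter `x₀`
form a convex set `K ⊆ ℝ²`, because such measures are closed under mixtures. If `p` bounds the
first coordinate on `K ∩ {b ≥ 0}` and `K` meets `{b > 0}` (Slater), then
`λ = inf {(p - a) / b : (a, b) ∈ K, b > 0} ≥ 0` satisfies `a + λ b ≤ p` on all of `K`: for `b < 0`,
mixing `(a, b)` with any `(a', b')`, `b' > 0`, into a point with second coordinate `0` gives
`(a - p) / (-b) ≤ (p - a') / b'`. With `p = p̄` this shows `d̄ ≤ p̄`; the reverse is weak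
duality. -/

/-- A finitely-supported probability measure on `ℝ` with barycenter `x₀`. -/
def IsFinSuppProbWithBarycenter (μ : Measure ℝ) (x₀ : ℝ) : Prop :=
  IsProbabilityMeasure μ ∧ (∃ s : Finset ℝ, μ ((↑s : Set ℝ)ᶜ) = 0) ∧ (∫ y, y ∂μ) = x₀

theorem integrable_of_measure_compl_finset_eq_zero {α E : Type*} [MeasurableSpace α]
    [MeasurableSingletonClass α] [NormedAddCommGroup E] {μ : Measure α} [IsFiniteMeasure μ]
    {s : Finset α} (hs : μ (↑s)ᶜ = 0) (h : α → E) : Integrable h μ := by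
  rw [← Measure.restrict_eq_self_of_ae_mem (mem_ae_iff.2 hs)]
  exact IntegrableOn.finset

theorem integral_ofReal_smul_add_ofReal_smul_measure {α : Type*} [MeasurableSpace α]
    {μ ν : Measure α} {h : α → ℝ} (hμ : Integrable h μ) (hν : Integrable h ν) {a b : ℝ}
    (ha : 0 ≤ a) (hb : 0 ≤ b) :
    ∫ y, h y ∂(ENNReal.ofReal a • μ + ENNReal.ofReal b • ν) =
      a * ∫ y, h y ∂μ + b * ∫ y, h y ∂ν := by
  rw [integral_add_measure (hμ.smul_measure ENNReal.ofReal_ne_top)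
    (hν.smul_measure ENNReal.ofReal_ne_top), integral_smul_measure, integral_smul_measure,
    ENNReal.toReal_ofReal ha, ENNReal.toReal_ofReal hb, smul_eq_mul, smul_eq_mul]

namespace IsFinSuppProbWithBarycenter

variable {μ ν : Measure ℝ} {x₀ : ℝ}

theorem integrable (hμ : IsFinSuppProbWithBarycenter μ x₀) (h : ℝ → ℝ) : Integrable h μ :=
  have := hμ.1
  integrable_of_measure_compl_finset_eq_zero hμ.2.1.choose_spec h

theorem integral_le_of_le_affine (hμ : IsFinSuppProbWithBarycenter μ x₀) {h : ℝ → ℝ} {α β : ℝ}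
    (hh : ∀ x, h x ≤ α + β * x) : ∫ y, h y ∂μ ≤ α + β * x₀ := by
  have := hμ.1
  have hid : Integrable (fun y : ℝ => y) μ := hμ.integrable _
  calc ∫ y, h y ∂μ ≤ ∫ y, α + β * y ∂μ :=
        integral_mono (hμ.integrable h) ((integrable_const α).add (hid.const_mul β)) hh
    _ = α + β * x₀ := by
        rw [integral_add (integrable_const α) (hid.const_mul β), integral_const_mul, hμ.2.2]
        simp

theorem integral_add_mul (hμ : IsFinSuppProbWithBarycenter μ x₀) (f g : ℝ → ℝ) (l : ℝ) :
    ∫ y, f y + l * g y ∂μ = ∫ y, f y ∂μ + l * ∫ y, g y ∂μ := by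
  rw [integral_add (hμ.integrable f) ((hμ.integrable g).const_mul l), integral_const_mul]

theorem convexComb (hμ : IsFinSuppProbWithBarycenter μ x₀) (hν : IsFinSuppProbWithBarycenter ν x₀)
    {a b : ℝ} (ha : 0 ≤ a) (hb : 0 ≤ b) (hab : a + b = 1) :
    IsFinSuppProbWithBarycenter (ENNReal.ofReal a • μ + ENNReal.ofReal b • ν) x₀ := by
  obtain ⟨s, hs⟩ := hμ.2.1
  obtain ⟨t, ht⟩ := hν.2.1
  have := hμ.1
  have := hν.1
  refine ⟨⟨?_⟩, ⟨s ∪ t, ?_⟩, ?_⟩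
  · simp [← ENNReal.ofReal_add ha hb, hab]
  · have hs' : μ (↑(s ∪ t))ᶜ = 0 := measure_mono_null (by simp) hs
    have ht' : ν (↑(s ∪ t))ᶜ = 0 := measure_mono_null (by simp) ht
    simp only [Measure.add_apply, Measure.smul_apply, hs', ht', smul_zero, add_zero]
  · rw [integral_ofReal_smul_add_ofReal_smul_measure (hμ.integrable _) (hν.integrable _) ha hb,
      hμ.2.2, hν.2.2, ← add_mul, hab, one_mul]

end IsFinSuppProbWithBarycenter

section Multiplier

variable {K : Set (ℝ × ℝ)} {p : ℝ}

theorem Convex.sub_mul_le_of_snd_neg_of_snd_pos (hK : Convex ℝ K)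
    (hp : ∀ z ∈ K, 0 ≤ z.2 → z.1 ≤ p) {z w : ℝ × ℝ} (hz : z ∈ K) (hw : w ∈ K)
    (hz₂ : z.2 < 0) (hw₂ : 0 < w.2) : (z.1 - p) * w.2 ≤ (p - w.1) * -z.2 := by
  have hd : 0 < w.2 - z.2 := by linarith
  -- weights chosen so that the mixture of `z` and `w` has second coordinate `0`
  have hmix := hK hz hw (div_nonneg hw₂.le hd.le) (div_nonneg (neg_nonneg.2 hz₂.le) hd.le)
    (by field_simp; ring)
  have hfeas := hp _ hmix (le_of_eq (by simp only [Prod.snd_add, Prod.smul_snd, smul_eq_mul]; ring))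
  simp only [Prod.fst_add, Prod.smul_fst, smul_eq_mul] at hfeas
  rw [div_mul_eq_mul_div, div_mul_eq_mul_div, ← add_div, div_le_iff₀ hd] at hfeas
  linarith

theorem Convex.exists_lagrange_multiplier (hK : Convex ℝ K) (hp : ∀ z ∈ K, 0 ≤ z.2 → z.1 ≤ p)
    (hslater : ∃ z ∈ K, 0 < z.2) : ∃ l, 0 ≤ l ∧ ∀ z ∈ K, z.1 + l * z.2 ≤ p := by
  set T := (fun w : ℝ × ℝ => (p - w.1) / w.2) '' {w ∈ K | 0 < w.2}
  obtain ⟨w₀, hw₀, hw₀₂⟩ := hslater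
  have hT : T.Nonempty := ⟨_, w₀, ⟨hw₀, hw₀₂⟩, rfl⟩
  have hT₀ : ∀ t ∈ T, 0 ≤ t := by
    rintro _ ⟨w, ⟨hw, hw₂⟩, rfl⟩
    exact div_nonneg (sub_nonneg.2 (hp w hw hw₂.le)) hw₂.le
  refine ⟨sInf T, le_csInf hT hT₀, fun z hz => ?_⟩
  rcases lt_trichotomy z.2 0 with hz₂ | hz₂ | hz₂
  · have : (z.1 - p) / -z.2 ≤ sInf T := by
      refine le_csInf hT ?_
      rintro _ ⟨w, ⟨hw, hw₂⟩, rfl⟩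
      rw [div_le_div_iff₀ (neg_pos.2 hz₂) hw₂]
      exact hK.sub_mul_le_of_snd_neg_of_snd_pos hp hz hw hz₂ hw₂
    rw [div_le_iff₀ (neg_pos.2 hz₂)] at this
    linarith
  · simpa [hz₂] using hp z hz hz₂.ge
  · have : sInf T ≤ (p - z.1) / z.2 := csInf_le ⟨0, hT₀⟩ ⟨z, ⟨hz, hz₂⟩, rfl⟩
    rw [le_div_iff₀ hz₂] at this
    linarith

end Multiplier

def barycenterIntegralPairs (f g : ℝ → ℝ) (x₀ : ℝ) : Set (ℝ × ℝ) :=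
  {z | ∃ μ : Measure ℝ, IsFinSuppProbWithBarycenter μ x₀ ∧ z = (∫ y, f y ∂μ, ∫ y, g y ∂μ)}

theorem convex_barycenterIntegralPairs (f g : ℝ → ℝ) (x₀ : ℝ) :
    Convex ℝ (barycenterIntegralPairs f g x₀) := by
  rintro _ ⟨μ, hμ, rfl⟩ _ ⟨ν, hν, rfl⟩ a b ha hb hab
  refine ⟨_, hμ.convexComb hν ha hb hab, ?_⟩
  simp only [integral_ofReal_smul_add_ofReal_smul_measure (hμ.integrable _) (hν.integrable _) ha hb,
    Prod.smul_mk, Prod.mk_add_mk, smul_eq_mul]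

/-- Lagrangian duality for a single expectation constraint: if `f` and `g` are bounded above by
affine functions and Slater's condition holds (some finitely-supported probability measure with
barycenter `x₀` gives `∫ g > 0`), then the primal value
`p̄ = sup { ∫ f dμ : μ finitely supported, barycenter x₀, ∫ g dμ ≥ 0 }` equals the dual value
`d̄ = inf_{λ ≥ 0} sup { ∫ (f + λ g) dμ : μ finitely supported, barycenter x₀ }`. -/
theorem lagrangian_duality_single_constraint (f g : ℝ → ℝ) (αf βf αg βg : ℝ)
    (hf : ∀ x, f x ≤ αf + βf * x) (hg : ∀ x, g x ≤ αg + βg * x) (x₀ : ℝ)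
    (slater : ∃ Q₀ : Measure ℝ, IsFinSuppProbWithBarycenter Q₀ x₀ ∧ 0 < ∫ y, g y ∂Q₀) :
    sSup {r : ℝ | ∃ μ : Measure ℝ, IsFinSuppProbWithBarycenter μ x₀ ∧
        0 ≤ ∫ y, g y ∂μ ∧ r = ∫ y, f y ∂μ} =
    sInf {r : ℝ | ∃ l : ℝ, 0 ≤ l ∧
        r = sSup {v : ℝ | ∃ μ : Measure ℝ, IsFinSuppProbWithBarycenter μ x₀ ∧
          v = ∫ y, f y + l * g y ∂μ}} := by
  obtain ⟨Q₀, hQ₀, hQ₀g⟩ := slater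
  set P := {r : ℝ | ∃ μ : Measure ℝ, IsFinSuppProbWithBarycenter μ x₀ ∧
    0 ≤ ∫ y, g y ∂μ ∧ r = ∫ y, f y ∂μ}
  set S := fun l : ℝ => {v : ℝ | ∃ μ : Measure ℝ, IsFinSuppProbWithBarycenter μ x₀ ∧
    v = ∫ y, f y + l * g y ∂μ}
  have hP : BddAbove P := ⟨αf + βf * x₀, by
    rintro _ ⟨μ, hμ, -, rfl⟩
    exact hμ.integral_le_of_le_affine hf⟩
  have hS (l : ℝ) (hl : 0 ≤ l) : BddAbove (S l) := ⟨(αf + l * αg) + (βf + l * βg) * x₀, by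
    rintro _ ⟨μ, hμ, rfl⟩
    exact hμ.integral_le_of_le_affine fun x => by nlinarith [hf x, hg x]⟩
  have weak : sSup P ∈ lowerBounds {r | ∃ l : ℝ, 0 ≤ l ∧ r = sSup (S l)} := by
    rintro _ ⟨l, hl, rfl⟩
    refine csSup_le ⟨_, Q₀, hQ₀, hQ₀g.le, rfl⟩ ?_
    rintro _ ⟨μ, hμ, hμg, rfl⟩
    refine le_csSup_of_le (hS l hl) ⟨μ, hμ, rfl⟩ ?_
    rw [hμ.integral_add_mul]
    exact le_add_of_nonneg_right (mul_nonneg hl hμg)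
  obtain ⟨l, hl, hlP⟩ := (convex_barycenterIntegralPairs f g x₀).exists_lagrange_multiplier
    (p := sSup P) (by rintro _ ⟨μ, hμ, rfl⟩ hμg; exact le_csSup hP ⟨μ, hμ, hμg, rfl⟩)
    ⟨_, ⟨Q₀, hQ₀, rfl⟩, hQ₀g⟩
  have strong : sSup (S l) ≤ sSup P := by
    refine csSup_le ⟨_, Q₀, hQ₀, rfl⟩ ?_
    rintro _ ⟨μ, hμ, rfl⟩
    rw [hμ.integral_add_mul]
    exact hlP _ ⟨μ, hμ, rfl⟩
  exact le_antisymm (le_csInf ⟨_, 0, le_rfl, rfl⟩ weak)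
    (csInf_le_of_le ⟨_, weak⟩ ⟨l, hl, rfl⟩ strong)
end
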